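/- arXiv:1507.00098 — 10 statements merged into one kernel-verified Lean document; each statement's English description precedes it below -/
import Mathlib

section
/- For every modulus m ≥ 1 and every integer a, the residue a^φ(m) mod m is idempotent, i.e., (a^φ(m))^2 ≡ a^φ(m) (mod m). -/
/-!
Let `p^k ∣ m`. If `p ∣ a`, then `p^k ∣ a^k ∣ a^φ(m)`, because `k ≤ φ(p^k) ≤ φ(m)`.
Otherwise `a` is a unit modulo `p^k` and `φ(p^k) ∣ φ(m)`, so Euler's theorem gives
`a^φ(m) ≡ 1 (mod p^k)`. Either way `p^k ∣ a^φ(m) (a^φ(m) - 1)`, hence so does `m`.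
-/

/-- `e` is an idempotent residue modulo `m`: `e^2 ≡ e (mod m)`. -/
def Idem (m : ℕ) (e : ZMod m) : Prop := e ^ 2 = e

/-- The order `|a|_m`: the least `n ≥ 1` such that `a^n` is idempotent mod `m`. -/
noncomputable def ord (m : ℕ) (a : ZMod m) : ℕ := sInf {n | 1 ≤ n ∧ Idem m (a ^ n)}

/-- `a` is regular modulo `m`: `a^(|a|_m + 1) ≡ a (mod m)`. -/
noncomputable def Reg (m : ℕ) (a : ZMod m) : Prop := a ^ (ord m a + 1) = a

/-- `R_m^e`: the regular residues mod `m` whose idempotent power is `e`. -/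
noncomputable def Rme (m : ℕ) (e : ZMod m) : Set (ZMod m) :=
  {a | Reg m a ∧ a ^ (ord m a) = e}

/-- The orbit of `a` modulo `m`: `{a^j mod m : 1 ≤ j ≤ |a|_m}`. -/
noncomputable def orb (m : ℕ) (a : ZMod m) : Finset (ZMod m) :=
  (Finset.Icc 1 (ord m a)).image (a ^ ·)

open Nat

theorem Int.ModEq.pow_totient {a : ℤ} {n : ℕ} (h : IsCoprime a n) :
    a ^ φ n ≡ 1 [ZMOD n] := by
  rw [← ZMod.intCast_eq_intCast_iff]
  simpa only [Units.val_pow_eq_pow_val, ZMod.coe_unitOfIsCoprime, Units.val_one, Int.cast_one,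
    Int.cast_pow]
    using congrArg Units.val (ZMod.pow_totient (ZMod.unitOfIsCoprime a h))

theorem Nat.le_totient_prime_pow {p : ℕ} (hp : p.Prime) : ∀ k, k ≤ φ (p ^ k)
  | 0 => Nat.zero_le _
  | k + 1 => by
    rw [totient_prime_pow_succ hp]
    calc k + 1 ≤ p ^ k := Nat.lt_pow_self hp.one_lt
      _ ≤ p ^ k * (p - 1) := Nat.le_mul_of_pos_right _ (Nat.sub_pos_of_lt hp.one_lt)

theorem Int.prime_pow_dvd_pow_mul_pow_sub_one {p k n : ℕ} (hp : p.Prime) (hkn : k ≤ n)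
    (hφ : φ (p ^ k) ∣ n) (a : ℤ) : (p : ℤ) ^ k ∣ a ^ n * (a ^ n - 1) := by
  by_cases hpa : (p : ℤ) ∣ a
  · exact ((pow_dvd_pow_of_dvd hpa k).trans (pow_dvd_pow a hkn)).mul_right _
  · have hcop : IsCoprime a ((p ^ k : ℕ) : ℤ) := by
      rw [Nat.cast_pow]
      exact ((Nat.prime_iff_prime_int.mp hp).coprime_iff_not_dvd.mpr hpa).symm.pow_right
    obtain ⟨c, rfl⟩ := hφ
    have hone : a ^ (φ (p ^ k) * c) ≡ 1 [ZMOD (p ^ k : ℕ)] := by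
      simpa [pow_mul] using (Int.ModEq.pow_totient hcop).pow c
    exact_mod_cast (Int.ModEq.dvd hone.symm).mul_left _

theorem Int.natCast_dvd_pow_totient_mul_pow_totient_sub_one (m : ℕ) (a : ℤ) :
    (m : ℤ) ∣ a ^ φ m * (a ^ φ m - 1) := by
  rcases m.eq_zero_or_pos with rfl | hm
  · simp
  rw [Int.natCast_dvd, Nat.dvd_iff_prime_pow_dvd_dvd]
  intro p k hp hpk
  have hφ : φ (p ^ k) ∣ φ m := totient_dvd_of_dvd hpk
  have hkm : k ≤ φ m :=
    (le_totient_prime_pow hp k).trans (Nat.le_of_dvd (totient_pos.mpr hm) hφ)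
  exact Int.natCast_dvd.mp (by exact_mod_cast prime_pow_dvd_pow_mul_pow_sub_one hp hkm hφ a)

theorem euler_thm_generalization_general (m : ℕ) (a : ℤ) :
    Idem m ((a : ZMod m) ^ m.totient) := by
  have h := Int.natCast_dvd_pow_totient_mul_pow_totient_sub_one m a
  rw [← ZMod.intCast_zmod_eq_zero_iff_dvd] at h
  push_cast at h
  unfold Idem
  linear_combination h

/-- Generalization of Euler's Theorem: for every `m ≥ 1` and every integer `a`,
`a^φ(m) mod m` is idempotent. -/
theorem euler_thm_generalization (m : ℕ) (hm : 1 ≤ m) (a : ℤ) :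
    Idem m ((a : ZMod m) ^ m.totient) :=
  euler_thm_generalization_general m a
end

section
/- Every residue a modulo m is regular (i.e., there exists n > 1 with a^n ≡ a (mod m)) if and only if m is square-free. -/
/-!
A ring in which every element satisfies `a ^ n = a` with `n > 1` is reduced: for `a`
nilpotent, `a = a * (a ^ (n - 1)) ^ j` for every `j`. Conversely, in a finite reduced commutative
ring the powers of `a` are eventually periodic, `a ^ i = a ^ (i + k)`, so `a - a ^ (k + 1)` is
nilpotent, hence zero. Finally `ZMod m` is reduced exactly when `m` is squarefree.
-/

theorem IsReduced.of_forall_exists_pow_eq_self {M : Type*} [MonoidWithZero M]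
    (h : ∀ a : M, ∃ n > 1, a ^ n = a) : IsReduced M := by
  refine ⟨fun a ⟨k, hk⟩ => ?_⟩
  obtain ⟨n, hn, han⟩ := h a
  have hperiodic : ∀ j : ℕ, a * (a ^ (n - 1)) ^ j = a := by
    intro j
    induction j with
    | zero => simp
    | succ j ih => rw [pow_succ, ← mul_assoc, ih, ← pow_succ', Nat.sub_add_cancel hn.le, han]
  have hvanish : (a ^ (n - 1)) ^ k = 0 := by
    rw [← pow_mul]
    exact pow_eq_zero_of_le (Nat.le_mul_of_pos_left k (by omega)) hk
  rw [← hperiodic k, hvanish, mul_zero]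

theorem exists_pow_add_eq_pow_of_finite {M : Type*} [Monoid M] [Finite M] (a : M) :
    ∃ i k, 0 < k ∧ a ^ (i + k) = a ^ i := by
  obtain ⟨i, j, hne, hij⟩ := Finite.exists_ne_map_eq_of_infinite (fun i : ℕ => a ^ i)
  rcases Nat.lt_or_gt_of_ne hne with hlt | hlt
  · exact ⟨i, j - i, by omega, by rw [Nat.add_sub_cancel' hlt.le]; exact hij.symm⟩
  · exact ⟨j, i - j, by omega, by rw [Nat.add_sub_cancel' hlt.le]; exact hij⟩

theorem IsReduced.pow_succ_eq_self_of_pow_add_eq_pow {R : Type*} [CommRing R] [IsReduced R]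
    {a : R} {i k : ℕ} (h : a ^ (i + k) = a ^ i) : a ^ (k + 1) = a := by
  have hnil : IsNilpotent (a - a ^ (k + 1)) := by
    refine ⟨i + 1, ?_⟩
    calc (a - a ^ (k + 1)) ^ (i + 1)
        = a ^ (i + 1) * (1 - a ^ k) ^ (i + 1) := by rw [← mul_pow]; ring
      _ = a * (a ^ i - a ^ (i + k)) * (1 - a ^ k) ^ i := by ring
      _ = 0 := by rw [h, sub_self, mul_zero, zero_mul]
  exact (sub_eq_zero.mp hnil.eq_zero).symm

theorem forall_exists_pow_eq_self_iff_isReduced {R : Type*} [CommRing R] [Finite R] :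
    (∀ a : R, ∃ n > 1, a ^ n = a) ↔ IsReduced R := by
  refine ⟨IsReduced.of_forall_exists_pow_eq_self, fun _ a => ?_⟩
  obtain ⟨i, k, hk, hik⟩ := exists_pow_add_eq_pow_of_finite a
  exact ⟨k + 1, by omega, IsReduced.pow_succ_eq_self_of_pow_add_eq_pow hik⟩

/-- Every residue modulo `m` is regular (i.e. `a^n ≡ a (mod m)` for some `n > 1`)
iff `m` is squarefree. -/
theorem all_regular_iff_squarefree (m : ℕ) (hm : 1 ≤ m) :
    (∀ a : ZMod m, ∃ n > 1, a ^ n = a) ↔ Squarefree m := by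
  have : NeZero m := ⟨by omega⟩
  rw [forall_exists_pow_eq_self_iff_isReduced, isReduced_zmod, or_iff_left (NeZero.ne m)]
end

section
/- A residue a modulo m is regular if and only if for every prime p, p | a and p | m imply p^(v_p(m)) | a, where v_p(m) is the exponent of p in m. -/
/-!
If `a ^ n ≡ a` with `n > 1`, then `p ^ k ∣ a * (a ^ (n - 1) - 1)` for every prime power
`p ^ k ∣ m`, and when `p ∣ a` the second factor is a unit mod `p`, so `p ^ k ∣ a`. Conversely
`n = φ m + 1` works prime power by prime power: on `p ^ k ∥ m` with `p ∣ a` both sides vanish by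
hypothesis, and otherwise Euler's theorem applies since `φ (p ^ k) ∣ φ m`.
-/

open Nat

theorem Prime.pow_dvd_of_pow_dvd_pow_sub_self {R : Type*} [CommRing R] [IsDomain R] {p a : R}
    (hp : Prime p) (hpa : p ∣ a) {n k : ℕ} (hn : 1 < n) (h : p ^ k ∣ a ^ n - a) : p ^ k ∣ a := by
  have hfactor : a ^ n - a = -(a * (1 - a ^ (n - 1))) := by
    conv_lhs => rw [← Nat.sub_add_cancel hn.le, pow_succ]
    ring
  have hunit : ¬p ∣ 1 - a ^ (n - 1) := fun hdvd =>
    hp.not_dvd_one <| by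
      simpa using dvd_add hdvd (dvd_pow hpa (by omega : n - 1 ≠ 0))
  rw [hfactor, dvd_neg] at h
  exact hp.pow_dvd_of_dvd_mul_right k hunit h

theorem Nat.modEq_of_forall_prime_pow_dvd {m a b : ℕ}
    (h : ∀ p k : ℕ, p.Prime → p ^ k ∣ m → a ≡ b [MOD p ^ k]) : a ≡ b [MOD m] := by
  rw [Nat.modEq_iff_dvd, Int.natCast_dvd, Nat.dvd_iff_prime_pow_dvd_dvd]
  intro p k hp hpk
  rw [← Int.natCast_dvd, ← Nat.modEq_iff_dvd]
  exact h p k hp hpk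

theorem Nat.pow_modEq_self_of_dvd {a d n : ℕ} (hda : d ∣ a) (hn : n ≠ 0) : a ^ n ≡ a [MOD d] :=
  (Nat.modEq_zero_iff_dvd.2 (hda.trans (dvd_pow_self a hn))).trans
    (Nat.modEq_zero_iff_dvd.2 hda).symm

theorem Nat.pow_totient_succ_modEq_self {a d m : ℕ} (hdm : d ∣ m) (had : a.Coprime d) :
    a ^ (φ m + 1) ≡ a [MOD d] := by
  obtain ⟨t, ht⟩ := Nat.totient_dvd_of_dvd hdm
  have heuler : a ^ φ m ≡ 1 [MOD d] := by
    simpa [ht, pow_mul] using (Nat.ModEq.pow_totient had).pow t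
  simpa [pow_succ] using heuler.mul_right a

/-- A residue `a` mod `m` is regular iff for every prime `p`, `p ∣ a` and `p ∣ m`
imply `p^(v_p(m)) ∣ a`. -/
theorem regular_iff_prime_pow_dvd (m a : ℕ) (hm : 1 ≤ m) :
    (∃ n > 1, a ^ n ≡ a [MOD m]) ↔
      ∀ p : ℕ, p.Prime → p ∣ a → p ∣ m → p ^ (m.factorization p) ∣ a := by
  constructor
  · rintro ⟨n, hn, h⟩ p hp hpa -
    have hmk : (m : ℤ) ∣ (a : ℤ) ^ n - a := by exact_mod_cast Nat.modEq_iff_dvd.1 h.symm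
    have hpk : (p : ℤ) ^ m.factorization p ∣ (a : ℤ) ^ n - a :=
      (Int.natCast_dvd_natCast.2 (Nat.ordProj_dvd m p)).trans hmk
    exact_mod_cast (Nat.prime_iff_prime_int.1 hp).pow_dvd_of_pow_dvd_pow_sub_self
      (Int.natCast_dvd_natCast.2 hpa) hn hpk
  · intro h
    refine ⟨φ m + 1, by simpa using Nat.totient_pos.2 hm, ?_⟩
    refine Nat.modEq_of_forall_prime_pow_dvd fun p k hp hpk => ?_
    by_cases hpa : p ∣ a
    · rcases Nat.eq_zero_or_pos k with rfl | hk
      · exact Nat.modEq_one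
      have hk_le : k ≤ m.factorization p := (hp.pow_dvd_iff_le_factorization (by omega)).1 hpk
      have hpm : p ∣ m := (dvd_pow_self p hk.ne').trans hpk
      exact Nat.pow_modEq_self_of_dvd ((pow_dvd_pow p hk_le).trans (h p hp hpa hpm)) (by omega)
    · exact Nat.pow_totient_succ_modEq_self hpk
        ((hp.coprime_iff_not_dvd.2 hpa).symm.pow_right k)
end

section
/- Let a be regular modulo m with order |a|_m (the least n ≥ 1 such that a^n is idempotent mod m). If a^k ≡ e (mod m) for some idempotent e, then |a|_m divides k. -/
/-!
If `a^(d+1) = a` then the positive powers of `a` are periodic with period `d`, so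
`a^k = a^(k mod d)` whenever `k mod d ≥ 1`. Hence if `a^k` is idempotent and `d = |a|_m`
does not divide `k`, then `a^(k mod d)` is an idempotent power with `1 ≤ k mod d < |a|_m`,
contradicting the minimality of `|a|_m`.
-/

section Periodic

variable {M : Type*} [Monoid M] {a : M} {d : ℕ}

theorem pow_mul_add_one_eq_self (ha : a ^ (d + 1) = a) (q : ℕ) : a ^ (q * d + 1) = a := by
  induction q with
  | zero => simp
  | succ q ih =>
    calc a ^ ((q + 1) * d + 1) = a ^ (q * d) * a ^ (d + 1) := by rw [← pow_add]; ring_nf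
      _ = a := by rw [ha, ← pow_succ, ih]

theorem pow_add_mul_eq_of_pow_succ_eq (ha : a ^ (d + 1) = a) {n : ℕ} (hn : 1 ≤ n) (q : ℕ) :
    a ^ (n + q * d) = a ^ n := by
  obtain ⟨n, rfl⟩ := Nat.exists_eq_add_of_le' hn
  rw [show n + 1 + q * d = n + (q * d + 1) by ring, pow_add, pow_mul_add_one_eq_self ha, pow_succ]

theorem pow_mod_eq_of_pow_succ_eq (ha : a ^ (d + 1) = a) {k : ℕ} (hk : 0 < k % d) :
    a ^ (k % d) = a ^ k := by
  conv_rhs => rw [← Nat.mod_add_div' k d]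
  exact (pow_add_mul_eq_of_pow_succ_eq ha hk _).symm

end Periodic

section Order

variable {m : ℕ} {a : ZMod m} {n : ℕ}

theorem ord_le (hn : 1 ≤ n) (h : Idem m (a ^ n)) : ord m a ≤ n :=
  Nat.sInf_le ⟨hn, h⟩

theorem one_le_ord (hn : 1 ≤ n) (h : Idem m (a ^ n)) : 1 ≤ ord m a :=
  (Nat.sInf_mem (s := {n | 1 ≤ n ∧ Idem m (a ^ n)}) ⟨n, hn, h⟩).1

theorem Reg.idem_pow_mod_ord (ha : Reg m a) (hn : 0 < n % ord m a) (h : Idem m (a ^ n)) :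
    Idem m (a ^ (n % ord m a)) := by
  rwa [Idem, pow_mod_eq_of_pow_succ_eq ha hn]

end Order

theorem ord_dvd_of_pow_idem_general (m : ℕ) (a e : ZMod m) (ha : Reg m a)
    (he : Idem m e) (k : ℕ) (h : a ^ k = e) : ord m a ∣ k := by
  subst h
  rcases Nat.eq_zero_or_pos k with rfl | hk
  · exact dvd_zero _
  have hord : 0 < ord m a := one_le_ord hk he
  refine Nat.dvd_of_mod_eq_zero (Nat.eq_zero_of_not_pos fun hr => ?_)
  exact (Nat.mod_lt k hord).not_ge (ord_le hr (ha.idem_pow_mod_ord hr he))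

/-- If `a` is regular mod `m` and `a^k` is congruent to an idempotent `e`, then
`|a|_m` divides `k`. -/
theorem ord_dvd_of_pow_idem (m : ℕ) (hm : 1 ≤ m) (a e : ZMod m) (ha : Reg m a)
    (he : Idem m e) (k : ℕ) (hk : 1 ≤ k) (h : a ^ k = e) : ord m a ∣ k :=
  ord_dvd_of_pow_idem_general m a e ha he k h
end

section
/- If a is regular modulo m, then its order |a|_m divides φ(m). -/
/-!
Put `d = |a|_m` and `e = a^d`. Regularity gives `a e = a`, so `1 - e` annihilates every positive
power of `a`, and `u = a + (1 - e)` has `u^k = a^k + (1 - e)` for `k ≥ 1`. Thus `u^k = 1` exactly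
when `a^k = e`, which makes `u` a unit of multiplicative order `d`; by Lagrange in `(ℤ/mℤ)ˣ`,
`d ∣ φ(m)`.
-/

section Monoid

variable {M : Type*} [Monoid M] {a : M}

theorem pow_add_mul_eq_pow_of_pow_add_eq {i p n : ℕ} (h : a ^ (i + p) = a ^ i) (hn : i ≤ n)
    (t : ℕ) : a ^ (n + p * t) = a ^ n := by
  obtain ⟨c, rfl⟩ := Nat.exists_eq_add_of_le hn
  induction t with
  | zero => simp
  | succ t ih =>
    calc a ^ (i + c + p * (t + 1)) = a ^ (c + p * t) * a ^ (i + p) := by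
          rw [← pow_add]; ring_nf
      _ = a ^ (i + c + p * t) := by rw [h, ← pow_add]; ring_nf
      _ = a ^ (i + c) := ih

theorem exists_pos_pow_isIdempotentElem [Finite M] (a : M) :
    ∃ n, 0 < n ∧ IsIdempotentElem (a ^ n) := by
  obtain ⟨i, j, hij, h⟩ := Set.Finite.exists_lt_map_eq_of_forall_mem
    (f := (a ^ · : ℕ → M)) (fun _ => Set.mem_univ _) Set.finite_univ
  obtain ⟨p, hp, rfl⟩ : ∃ p, 0 < p ∧ j = i + p := ⟨j - i, by omega, by omega⟩
  refine ⟨p * (i + 1), by positivity, ?_⟩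
  rw [IsIdempotentElem, ← pow_add,
    pow_add_mul_eq_pow_of_pow_add_eq h.symm (by nlinarith)]

end Monoid

section CommRing

variable {R : Type*} [CommRing R] {a e : R}

theorem add_one_sub_pow_succ (he : IsIdempotentElem e) (hae : a * e = a) (k : ℕ) :
    (a + (1 - e)) ^ (k + 1) = a ^ (k + 1) + (1 - e) := by
  have hann : a * (1 - e) = 0 := by rw [mul_sub, mul_one, hae, sub_self]
  induction k with
  | zero => simp
  | succ k ih =>
    calc (a + (1 - e)) ^ (k + 1 + 1) = (a ^ (k + 1) + (1 - e)) * (a + (1 - e)) := by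
          rw [pow_succ, ih]
      _ = a ^ (k + 2) + a ^ k * (a * (1 - e)) + a * (1 - e) + (1 - e) * (1 - e) := by ring
      _ = a ^ (k + 1 + 1) + (1 - e) := by rw [hann, he.one_sub.eq]; ring

theorem orderOf_add_one_sub_pow {d : ℕ} (hd : 0 < d) (he : IsIdempotentElem (a ^ d))
    (hreg : a ^ (d + 1) = a) (hmin : ∀ k, 0 < k → k < d → ¬IsIdempotentElem (a ^ k)) :
    orderOf (a + (1 - a ^ d)) = d := by
  have hae : a * a ^ d = a := by rw [← pow_succ', hreg]
  have hpow (k : ℕ) (hk : 0 < k) : (a + (1 - a ^ d)) ^ k = a ^ k + (1 - a ^ d) := by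
    obtain ⟨k, rfl⟩ := Nat.exists_eq_succ_of_ne_zero hk.ne'
    exact add_one_sub_pow_succ he hae k
  rw [orderOf_eq_iff hd]
  refine ⟨by rw [hpow d hd]; ring, fun k hkd hk hone => hmin k hk hkd ?_⟩
  have hak : a ^ k = a ^ d := by rw [hpow k hk] at hone; linear_combination hone
  rwa [hak]

end CommRing

theorem ZMod.orderOf_dvd_totient_of_isUnit {m : ℕ} {u : ZMod m} (hu : IsUnit u) :
    orderOf u ∣ m.totient := by
  obtain ⟨v, rfl⟩ := hu
  rw [orderOf_units]
  exact orderOf_dvd_of_pow_eq_one (ZMod.pow_totient v)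

theorem idem_iff_isIdempotentElem {m : ℕ} {e : ZMod m} : Idem m e ↔ IsIdempotentElem e := by
  rw [Idem, sq, IsIdempotentElem]

theorem ord_pos_and_idem_pow_ord (m : ℕ) [NeZero m] (a : ZMod m) :
    0 < ord m a ∧ Idem m (a ^ ord m a) := by
  obtain ⟨n, hn, hidem⟩ := exists_pos_pow_isIdempotentElem a
  exact Nat.sInf_mem (s := {n | 1 ≤ n ∧ Idem m (a ^ n)})
    ⟨n, hn, idem_iff_isIdempotentElem.mpr hidem⟩

theorem not_idem_pow_of_lt_ord {m : ℕ} {a : ZMod m} {k : ℕ} (hk : 0 < k) (hlt : k < ord m a) :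
    ¬Idem m (a ^ k) :=
  fun h => Nat.notMem_of_lt_sInf hlt ⟨hk, h⟩

/-- If `a` is regular modulo `m`, its order divides `φ(m)`. -/
theorem ord_dvd_totient (m : ℕ) (hm : 1 ≤ m) (a : ZMod m) (ha : Reg m a) :
    ord m a ∣ m.totient := by
  have : NeZero m := NeZero.of_pos hm
  obtain ⟨hpos, hidem⟩ := ord_pos_and_idem_pow_ord m a
  have horder : orderOf (a + (1 - a ^ ord m a)) = ord m a :=
    orderOf_add_one_sub_pow hpos (idem_iff_isIdempotentElem.mp hidem) ha
      fun k hk hlt => idem_iff_isIdempotentElem.not.mp (not_idem_pow_of_lt_ord hk hlt)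
  rw [← horder]
  exact ZMod.orderOf_dvd_totient_of_isUnit (orderOf_pos_iff.mp (horder.symm ▸ hpos)).isUnit
end

section
/- If a is regular modulo m, then for all positive integers k, l: a^k ≡ a^l (mod m) if and only if k ≡ l (mod |a|_m). -/
/-! For regular `a` with `d = |a|`, the sequence `n ↦ a ^ n` is periodic of period `d` on
`n ≥ 1`, which gives `k ≡ l [MOD d] → a ^ k = a ^ l`. Conversely, a coincidence
`a ^ k = a ^ (k + s)` with `s > 0` first makes `a ^ ((k + 1) * s)` idempotent, so `d > 0`;
multiplying by a power of `a` that brings `k` to `0` mod `d` then shows that `a ^ s` itself is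
idempotent, and minimality of `d` forces `d ∣ s`. The argument works in any monoid. -/

section Monoid

variable {M : Type*} [Monoid M] {a : M} {d k l n s : ℕ}

/-- This is `0` when no positive power of `a` is idempotent (`sInf ∅ = 0`). -/
noncomputable def idempotentPowIndex (a : M) : ℕ :=
  sInf {n | 0 < n ∧ IsIdempotentElem (a ^ n)}

theorem periodic_pow_add_of_pow_add_eq (h : a ^ (k + s) = a ^ k) :
    Function.Periodic (fun n ↦ a ^ (n + k)) s := fun n ↦ by
  show a ^ (n + s + k) = a ^ (n + k)
  rw [add_assoc, add_comm s k, pow_add, h, ← pow_add]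

theorem exists_isIdempotentElem_pow_of_pow_add_eq (h : a ^ (k + s) = a ^ k) (hs : 0 < s) :
    ∃ n, 0 < n ∧ IsIdempotentElem (a ^ n) := by
  have hP : Function.Periodic (fun n ↦ a ^ (n + k)) ((k + 1) * s) := by
    simpa using (periodic_pow_add_of_pow_add_eq h).nat_mul (k + 1)
  have hkn : k ≤ (k + 1) * s := (Nat.le_mul_of_pos_right (k + 1) hs).trans' k.le_succ
  obtain ⟨j, hj⟩ := Nat.exists_eq_add_of_le hkn
  refine ⟨(k + 1) * s, by positivity, ?_⟩
  calc a ^ ((k + 1) * s) * a ^ ((k + 1) * s) = a ^ (j + (k + 1) * s + k) := by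
        rw [← pow_add, hj]; ring_nf
    _ = a ^ ((k + 1) * s) := (hP j).trans (by rw [hj, add_comm])

theorem pow_eq_pow_of_pow_succ_eq_of_modEq (ha : a ^ (d + 1) = a) (hk : 0 < k) (hl : 0 < l)
    (h : k ≡ l [MOD d]) : a ^ k = a ^ l := by
  have hP := periodic_pow_add_of_pow_add_eq (a := a) (k := 1) (s := d) (by rwa [pow_one, add_comm])
  obtain ⟨k, rfl⟩ := Nat.exists_eq_add_one_of_ne_zero hk.ne'
  obtain ⟨l, rfl⟩ := Nat.exists_eq_add_one_of_ne_zero hl.ne'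
  calc a ^ (k + 1) = a ^ (k % d + 1) := (hP.map_mod_nat k).symm
    _ = a ^ (l % d + 1) := by rw [Nat.ModEq.add_right_cancel' 1 h]
    _ = a ^ (l + 1) := hP.map_mod_nat l

theorem isIdempotentElem_pow_of_pow_succ_eq_of_pow_add_eq (ha : a ^ (d + 1) = a) (hd : 0 < d)
    (h : a ^ (k + s) = a ^ k) : IsIdempotentElem (a ^ s) := by
  rcases s.eq_zero_or_pos with rfl | hs
  · simp [IsIdempotentElem]
  -- multiplying by `a ^ (s + k * d)` sends the exponents `k`, `k + s` to `s`, `2 * s` mod `d + 1`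
  obtain ⟨d, rfl⟩ := Nat.exists_eq_add_one_of_ne_zero hd.ne'
  have shift (n : ℕ) (hn : 0 < n) : a ^ (n + k * (d + 1)) = a ^ n :=
    pow_eq_pow_of_pow_succ_eq_of_modEq ha (by positivity) hn (Nat.add_mul_mod_self_right n k _)
  calc a ^ s * a ^ s = a ^ (s + s + k * (d + 1)) := by rw [← pow_add, shift _ (by positivity)]
    _ = a ^ (s + k * d) * a ^ (k + s) := by rw [← pow_add]; ring_nf
    _ = a ^ (s + k * (d + 1)) := by rw [h, ← pow_add]; ring_nf
    _ = a ^ s := shift s hs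

theorem idempotentPowIndex_pos (hn : 0 < n) (he : IsIdempotentElem (a ^ n)) :
    0 < idempotentPowIndex a :=
  (Nat.sInf_mem ⟨n, hn, he⟩ : idempotentPowIndex a ∈ _).1

theorem idempotentPowIndex_dvd (ha : a ^ (idempotentPowIndex a + 1) = a) (hn : 0 < n)
    (he : IsIdempotentElem (a ^ n)) : idempotentPowIndex a ∣ n := by
  set d := idempotentPowIndex a
  refine Nat.dvd_of_mod_eq_zero (Nat.eq_zero_of_not_pos fun hr ↦ ?_)
  have hmod : a ^ (n % d) = a ^ n := pow_eq_pow_of_pow_succ_eq_of_modEq ha hr hn (Nat.mod_modEq n d)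
  exact (Nat.mod_lt n (idempotentPowIndex_pos hn he)).not_ge (Nat.sInf_le ⟨hr, hmod ▸ he⟩)

theorem pow_eq_pow_iff_modEq_idempotentPowIndex (ha : a ^ (idempotentPowIndex a + 1) = a)
    (hk : 0 < k) (hl : 0 < l) : a ^ k = a ^ l ↔ k ≡ l [MOD idempotentPowIndex a] := by
  refine ⟨fun h ↦ ?_, pow_eq_pow_of_pow_succ_eq_of_modEq ha hk hl⟩
  wlog hkl : k ≤ l generalizing k l
  · exact (this hl hk h.symm (le_of_not_ge hkl)).symm
  obtain ⟨s, rfl⟩ := Nat.exists_eq_add_of_le hkl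
  rcases s.eq_zero_or_pos with rfl | hs
  · rfl
  obtain ⟨n, hn, he⟩ := exists_isIdempotentElem_pow_of_pow_add_eq h.symm hs
  have hes : IsIdempotentElem (a ^ s) :=
    isIdempotentElem_pow_of_pow_succ_eq_of_pow_add_eq ha (idempotentPowIndex_pos hn he) h.symm
  simpa [Nat.modEq_iff_dvd' hkl] using idempotentPowIndex_dvd ha hs hes

end Monoid

theorem ord_eq_idempotentPowIndex (m : ℕ) (a : ZMod m) : ord m a = idempotentPowIndex a := by
  simp only [ord, idempotentPowIndex, Idem, Nat.one_le_iff_ne_zero, Nat.pos_iff_ne_zero, sq,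
    IsIdempotentElem]

theorem pow_eq_pow_iff_modEq_ord_general (m : ℕ) (a : ZMod m) (ha : Reg m a)
    (k l : ℕ) (hk : 1 ≤ k) (hl : 1 ≤ l) :
    a ^ k = a ^ l ↔ k ≡ l [MOD ord m a] := by
  rw [Reg, ord_eq_idempotentPowIndex] at ha
  rw [ord_eq_idempotentPowIndex]
  exact pow_eq_pow_iff_modEq_idempotentPowIndex ha hk hl

/-- If `a` is regular mod `m`, then `a^k ≡ a^l (mod m)` iff `k ≡ l (mod |a|_m)`. -/
theorem pow_eq_pow_iff_modEq_ord (m : ℕ) (hm : 1 ≤ m) (a : ZMod m) (ha : Reg m a)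
    (k l : ℕ) (hk : 1 ≤ k) (hl : 1 ≤ l) :
    a ^ k = a ^ l ↔ k ≡ l [MOD ord m a] :=
  pow_eq_pow_iff_modEq_ord_general m a ha k l hk hl
end

section
/- If a is regular modulo m and k ≥ 1, then the order of a^k modulo m equals |a|_m / gcd(k, |a|_m). -/
theorem Nat.dvd_mul_iff_div_gcd_dvd {d k n : ℕ} (hk : k ≠ 0) :
    d ∣ k * n ↔ d / Nat.gcd k d ∣ n := by
  set g := Nat.gcd k d
  have hg : 0 < g := Nat.gcd_pos_of_pos_left d (Nat.pos_of_ne_zero hk)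
  have hcop : Nat.Coprime (d / g) (k / g) := (Nat.coprime_div_gcd_div_gcd hg).symm
  calc d ∣ k * n ↔ g * (d / g) ∣ g * (k / g) * n := by
        rw [Nat.mul_div_cancel' (Nat.gcd_dvd_right k d), Nat.mul_div_cancel' (Nat.gcd_dvd_left k d)]
    _ ↔ d / g ∣ k / g * n := by rw [mul_assoc, Nat.mul_dvd_mul_iff_left hg]
    _ ↔ d / g ∣ n := hcop.dvd_mul_left

theorem Nat.sInf_setOf_ne_zero_and_dvd (c : ℕ) : sInf {n | n ≠ 0 ∧ c ∣ n} = c := by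
  rcases eq_or_ne c 0 with rfl | hc
  · simp
  · refine le_antisymm (Nat.sInf_le ⟨hc, dvd_rfl⟩) (le_csInf ⟨c, hc, dvd_rfl⟩ ?_)
    rintro n ⟨hn, hcn⟩
    exact Nat.le_of_dvd (Nat.pos_of_ne_zero hn) hcn

section Monoid

variable {M : Type*} [Monoid M] {a : M} {d n : ℕ}

theorem pow_add_eq_pow_of_pow_succ_eq (h : a ^ (d + 1) = a) (hn : n ≠ 0) :
    a ^ (n + d) = a ^ n := by
  obtain ⟨n, rfl⟩ := Nat.exists_eq_succ_of_ne_zero hn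
  rw [Nat.succ_add_eq_add_succ, pow_add, h, pow_succ]

theorem pow_add_mul_eq_pow_of_pow_succ_eq (h : a ^ (d + 1) = a) (hn : n ≠ 0) (t : ℕ) :
    a ^ (n + d * t) = a ^ n := by
  induction t with
  | zero => rw [mul_zero, add_zero]
  | succ t ih =>
    rw [Nat.mul_succ, ← add_assoc, pow_add_eq_pow_of_pow_succ_eq h (by omega), ih]

-- `0` when no positive power of `a` is idempotent.
noncomputable def idemPeriod (a : M) : ℕ := sInf {n | n ≠ 0 ∧ IsIdempotentElem (a ^ n)}

theorem idemPeriod_le (hn : n ≠ 0) (h : IsIdempotentElem (a ^ n)) : idemPeriod a ≤ n :=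
  Nat.sInf_le ⟨hn, h⟩

theorem idemPeriod_ne_zero (hn : n ≠ 0) (h : IsIdempotentElem (a ^ n)) : idemPeriod a ≠ 0 :=
  (Nat.sInf_mem (s := {n | n ≠ 0 ∧ IsIdempotentElem (a ^ n)}) ⟨n, hn, h⟩).1

theorem isIdempotentElem_pow_iff_idemPeriod_dvd (ha : a ^ (idemPeriod a + 1) = a) (hn : n ≠ 0) :
    IsIdempotentElem (a ^ n) ↔ idemPeriod a ∣ n := by
  set d := idemPeriod a
  constructor
  · intro h
    have hd : d ≠ 0 := idemPeriod_ne_zero hn h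
    by_contra hdn
    have hr : n % d ≠ 0 := fun h0 => hdn (Nat.dvd_of_mod_eq_zero h0)
    have hpow : a ^ n = a ^ (n % d) := by
      conv_lhs => rw [← Nat.mod_add_div n d]
      exact pow_add_mul_eq_pow_of_pow_succ_eq ha hr _
    exact (Nat.mod_lt n (Nat.pos_of_ne_zero hd)).not_ge (idemPeriod_le hr (hpow ▸ h))
  · rintro ⟨t, rfl⟩
    rw [IsIdempotentElem, ← pow_add]
    exact pow_add_mul_eq_pow_of_pow_succ_eq ha hn t

theorem idemPeriod_pow (ha : a ^ (idemPeriod a + 1) = a) {k : ℕ} (hk : k ≠ 0) :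
    idemPeriod (a ^ k) = idemPeriod a / Nat.gcd k (idemPeriod a) := by
  have hset : {n | n ≠ 0 ∧ IsIdempotentElem ((a ^ k) ^ n)} =
      {n | n ≠ 0 ∧ idemPeriod a / Nat.gcd k (idemPeriod a) ∣ n} := by
    ext n
    refine and_congr_right fun hn => ?_
    rw [← pow_mul, isIdempotentElem_pow_iff_idemPeriod_dvd ha (mul_ne_zero hk hn),
      Nat.dvd_mul_iff_div_gcd_dvd hk]
  rw [idemPeriod, hset, Nat.sInf_setOf_ne_zero_and_dvd]

end Monoid

theorem ord_eq_idemPeriod (m : ℕ) (a : ZMod m) : ord m a = idemPeriod a := by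
  simp only [ord, idemPeriod, Idem, IsIdempotentElem, ← pow_two, Nat.one_le_iff_ne_zero]

theorem ord_pow_general (m : ℕ) (a : ZMod m) (ha : Reg m a) (k : ℕ)
    (hk : 1 ≤ k) : ord m (a ^ k) = ord m a / Nat.gcd k (ord m a) := by
  rw [Reg, ord_eq_idemPeriod] at ha
  simp only [ord_eq_idemPeriod]
  exact idemPeriod_pow ha (Nat.one_le_iff_ne_zero.mp hk)

/-- If `a` is regular mod `m` and `k ≥ 1`, then `|a^k|_m = |a|_m / gcd(k, |a|_m)`. -/
theorem ord_pow (m : ℕ) (hm : 1 ≤ m) (a : ZMod m) (ha : Reg m a) (k : ℕ)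
    (hk : 1 ≤ k) : ord m (a ^ k) = ord m a / Nat.gcd k (ord m a) :=
  ord_pow_general m a ha k hk
end

section
/- Let b, c be regular residues modulo m and n, k ≥ 1. Then both b^n and b^k lie (mod m) in the orbit of c if and only if b^(gcd(n,k)) lies in the orbit of c. -/
/-! For regular `b`, the exponent of a positive power of `b` matters only modulo `|b|_m`.
Adding a common multiple of `|b|_m` to both Bézout coefficients of `gcd(n,k) = An + Bk` makes
them positive, so `b^gcd(n,k) = (b^n)^u (b^k)^v` with `u, v ≥ 1`. The orbit of a regular `c` is
the set of positive powers of `c`, hence closed under products and positive powers. Conversely,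
`b^n` and `b^k` are positive powers of `b^gcd(n,k)`. -/

theorem pow_add_mul_eq_pow {M : Type*} [Monoid M] {a : M} {d j : ℕ} (h : a ^ (d + 1) = a)
    (hj : 0 < j) (t : ℕ) : a ^ (j + t * d) = a ^ j := by
  have hself : ∀ t, a ^ (t * d + 1) = a := by
    intro t
    induction t with
    | zero => simp
    | succ t ih => rw [Nat.succ_mul, add_right_comm, pow_add, ih, ← pow_succ', h]
  obtain ⟨i, rfl⟩ := Nat.exists_eq_add_one_of_ne_zero hj.ne'
  calc a ^ (i + 1 + t * d) = a ^ i * a ^ (t * d + 1) := by rw [← pow_add]; ring_nf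
    _ = a ^ (i + 1) := by rw [hself, pow_succ]

theorem Nat.exists_gcd_add_mul_eq_mul_add_mul (n k d : ℕ) (hd : 0 < d) :
    ∃ s u v : ℕ, 0 < u ∧ 0 < v ∧ n.gcd k + s * d = u * n + v * k := by
  set A := n.gcdA k
  set B := n.gcdB k
  set t := A.natAbs + B.natAbs + 1
  have htd : (t : ℤ) ≤ t * d := by exact_mod_cast Nat.le_mul_of_pos_right t hd
  have hA : 0 < A + t * d := by omega
  have hB : 0 < B + t * d := by omega
  refine ⟨t * (n + k), (A + t * d).toNat, (B + t * d).toNat, by omega, by omega, ?_⟩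
  zify
  rw [Int.toNat_of_nonneg hA.le, Int.toNat_of_nonneg hB.le, Nat.gcd_eq_gcd_ab]
  ring

section

variable {m : ℕ}

-- `ord m a = sInf ∅ = 0` when no positive power of `a` is idempotent (e.g. `2` in `ZMod 0`).
theorem ord_pos_of_mem_orb {c x : ZMod m} (hx : x ∈ orb m c) : 0 < ord m c := by
  obtain ⟨j, hj, -⟩ := Finset.mem_image.1 hx
  exact Finset.nonempty_Icc.1 ⟨j, hj⟩

theorem idem_pow_ord {a : ZMod m} (h : 0 < ord m a) : Idem m (a ^ ord m a) :=
  (Nat.sInf_mem (Nat.nonempty_of_pos_sInf h)).2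

theorem ord_pos_of_idem_pow {a : ZMod m} {n : ℕ} (hn : 0 < n) (h : Idem m (a ^ n)) :
    0 < ord m a :=
  (Nat.sInf_mem (s := {n | 1 ≤ n ∧ Idem m (a ^ n)}) ⟨n, hn, h⟩).1

theorem mem_orb_iff {c x : ZMod m} (hc : Reg m c) (hr : 0 < ord m c) :
    x ∈ orb m c ↔ ∃ j, 0 < j ∧ c ^ j = x := by
  simp only [orb, Finset.mem_image, Finset.mem_Icc]
  refine ⟨fun ⟨j, ⟨hj, _⟩, hx⟩ => ⟨j, hj, hx⟩, fun ⟨j, hj, hx⟩ => ?_⟩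
  refine ⟨(j - 1) % ord m c + 1, ⟨by omega, Nat.mod_lt _ hr⟩, ?_⟩
  rw [← hx, ← pow_add_mul_eq_pow hc (Nat.succ_pos _) ((j - 1) / ord m c)]
  have := Nat.mod_add_div (j - 1) (ord m c)
  congr 1
  grind

theorem mul_mem_orb {c x y : ZMod m} (hc : Reg m c) (hx : x ∈ orb m c) (hy : y ∈ orb m c) :
    x * y ∈ orb m c := by
  have hr := ord_pos_of_mem_orb hx
  obtain ⟨i, hi, rfl⟩ := (mem_orb_iff hc hr).1 hx
  obtain ⟨j, hj, rfl⟩ := (mem_orb_iff hc hr).1 hy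
  exact (mem_orb_iff hc hr).2 ⟨i + j, by omega, pow_add c i j⟩

theorem pow_mem_orb {c x : ZMod m} (hc : Reg m c) (hx : x ∈ orb m c) {t : ℕ} (ht : 0 < t) :
    x ^ t ∈ orb m c := by
  have hr := ord_pos_of_mem_orb hx
  obtain ⟨i, hi, rfl⟩ := (mem_orb_iff hc hr).1 hx
  exact (mem_orb_iff hc hr).2 ⟨i * t, Nat.mul_pos hi ht, pow_mul c i t⟩

theorem pow_ord_of_mem_orb {c x : ZMod m} (hc : Reg m c) (hx : x ∈ orb m c) :
    x ^ ord m c = c ^ ord m c := by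
  have hr := ord_pos_of_mem_orb hx
  obtain ⟨i, hi, rfl⟩ := (mem_orb_iff hc hr).1 hx
  obtain ⟨i, rfl⟩ := Nat.exists_eq_add_one_of_ne_zero hi.ne'
  rw [← pow_mul, ← pow_add_mul_eq_pow hc hr i]
  ring_nf

theorem ord_pos_of_pow_mem_orb {b c : ZMod m} (hc : Reg m c) {n : ℕ} (hn : 0 < n)
    (h : b ^ n ∈ orb m c) : 0 < ord m b := by
  have hr := ord_pos_of_mem_orb h
  refine ord_pos_of_idem_pow (Nat.mul_pos hn hr) ?_
  rw [pow_mul, pow_ord_of_mem_orb hc h]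
  exact idem_pow_ord hr

end

theorem pow_mem_orb_gcd_general (m : ℕ) (b c : ZMod m) (hb : Reg m b)
    (hc : Reg m c) (n k : ℕ) (hn : 1 ≤ n) (hk : 1 ≤ k) :
    (b ^ n ∈ orb m c ∧ b ^ k ∈ orb m c) ↔ b ^ (Nat.gcd n k) ∈ orb m c := by
  constructor
  · rintro ⟨hbn, hbk⟩
    obtain ⟨s, u, v, hu, hv, hsuv⟩ :=
      Nat.exists_gcd_add_mul_eq_mul_add_mul n k _ (ord_pos_of_pow_mem_orb hc hn hbn)
    have hgcd : b ^ n.gcd k = (b ^ n) ^ u * (b ^ k) ^ v := by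
      rw [← pow_add_mul_eq_pow hb (Nat.gcd_pos_of_pos_left k hn) s, hsuv, pow_add,
        ← pow_mul, ← pow_mul, mul_comm n, mul_comm k]
    rw [hgcd]
    exact mul_mem_orb hc (pow_mem_orb hc hbn hu) (pow_mem_orb hc hbk hv)
  · intro h
    have hdvd : ∀ a, 0 < a → n.gcd k ∣ a → b ^ a ∈ orb m c := by
      rintro a ha ⟨t, rfl⟩
      rw [pow_mul]
      exact pow_mem_orb hc h (Nat.pos_of_mul_pos_left ha)
    exact ⟨hdvd n hn (Nat.gcd_dvd_left n k), hdvd k hk (Nat.gcd_dvd_right n k)⟩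

/-- For regular `b, c` mod `m` and `n, k ≥ 1`: both `b^n` and `b^k` lie in the
orbit of `c` iff `b^(gcd(n,k))` does. -/
theorem pow_mem_orb_gcd (m : ℕ) (hm : 1 ≤ m) (b c : ZMod m) (hb : Reg m b)
    (hc : Reg m c) (n k : ℕ) (hn : 1 ≤ n) (hk : 1 ≤ k) :
    (b ^ n ∈ orb m c ∧ b ^ k ∈ orb m c) ↔ b ^ (Nat.gcd n k) ∈ orb m c :=
  pow_mem_orb_gcd_general m b c hb hc n k hn hk
end

section
/- Given positive integers u, v, w with w | gcd(u,v), there exist positive integers u₁, u₂, v₁, v₂, w₁, w₂ such that u = u₁u₂, v = v₁v₂, w = w₁w₂, gcd(u,v) = u₂v₁, w₁ | v₁ | u₁, w₂ | u₂ | v₂, and gcd(u₁,u₂) = gcd(v₁,v₂) = gcd(w₁,w₂) = gcd(u₁,v₂) = gcd(u₂,v₁) = 1. -/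
/-!
Sort the primes into the class `P` of those with `v_p(v) ≤ v_p(u)` and its complement, and let
`u₁, v₁, w₁` be the `P`-parts of `u, v, w` and `u₂, v₂, w₂` the complementary parts. On `P` the
exponent of `gcd(u, v)` is `v_p(v)`, off `P` it is `v_p(u)`, which gives `gcd(u, v) = u₂ v₁`; the
divisibilities compare exponents prime by prime, and the coprimalities hold because the two parts
live on disjoint sets of primes.
-/

namespace Nat

def factorPart (P : ℕ → Prop) [DecidablePred P] (n : ℕ) : ℕ :=
  (n.factorization.filter P).prod (· ^ ·)

variable {P Q : ℕ → Prop} [DecidablePred P] [DecidablePred Q] {a b n : ℕ}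

theorem factorization_factorPart :
    (factorPart P n).factorization = n.factorization.filter P :=
  prod_pow_factorization_eq_self fun _ hp => prime_of_mem_primeFactors (Finset.mem_filter.1 hp).1

theorem factorPart_pos : 0 < factorPart P n :=
  Finset.prod_pos fun _ hp => pow_pos (prime_of_mem_primeFactors (Finset.mem_filter.1 hp).1).pos _

theorem factorPart_ne_zero : factorPart P n ≠ 0 :=
  factorPart_pos.ne'

theorem factorPart_mul_factorPart_not (hn : n ≠ 0) :
    factorPart P n * factorPart (¬P ·) n = n :=
  eq_of_factorization_eq (mul_ne_zero factorPart_ne_zero factorPart_ne_zero) hn fun p => by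
    rw [factorization_mul factorPart_ne_zero factorPart_ne_zero, factorization_factorPart,
      factorization_factorPart, Finsupp.filter_add_filter_not]

theorem factorPart_dvd_factorPart (h : ∀ p, P p → a.factorization p ≤ b.factorization p) :
    factorPart P a ∣ factorPart P b := by
  refine (factorization_le_iff_dvd factorPart_ne_zero factorPart_ne_zero).1 fun p => ?_
  simp only [factorization_factorPart, Finsupp.filter_apply]
  split_ifs with hp
  exacts [h p hp, le_rfl]

theorem factorPart_dvd_factorPart_of_dvd (hab : a ∣ b) (hb : b ≠ 0) :
    factorPart P a ∣ factorPart P b :=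
  factorPart_dvd_factorPart fun _ _ =>
    (factorization_le_iff_dvd (ne_zero_of_dvd_ne_zero hb hab) hb).2 hab _

theorem coprime_factorPart_factorPart (h : ∀ p, P p → ¬Q p) :
    Coprime (factorPart P a) (factorPart Q b) := by
  refine coprime_of_dvd fun p hp hpa hpb => ?_
  rw [hp.dvd_iff_one_le_factorization factorPart_ne_zero, factorization_factorPart,
    Finsupp.filter_apply] at hpa hpb
  by_cases hP : P p
  · rw [if_neg (h p hP)] at hpb
    omega
  · rw [if_neg hP] at hpa
    omega

theorem gcd_eq_factorPart_mul_factorPart (ha : a ≠ 0) (hb : b ≠ 0) :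
    gcd a b = factorPart (fun p => ¬b.factorization p ≤ a.factorization p) a *
      factorPart (fun p => b.factorization p ≤ a.factorization p) b := by
  refine eq_of_factorization_eq (gcd_ne_zero_left ha)
    (mul_ne_zero factorPart_ne_zero factorPart_ne_zero) fun p => ?_
  rw [factorization_gcd ha hb, factorization_mul factorPart_ne_zero factorPart_ne_zero,
    factorization_factorPart, factorization_factorPart]
  simp only [Finsupp.inf_apply, Finsupp.add_apply, Finsupp.filter_apply]
  split_ifs <;> omega

end Nat

theorem factorization_lemma_general (u v w : ℕ) (hu : 1 ≤ u) (hv : 1 ≤ v)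
    (hdvd : w ∣ Nat.gcd u v) :
    ∃ u₁ u₂ v₁ v₂ w₁ w₂ : ℕ,
      1 ≤ u₁ ∧ 1 ≤ u₂ ∧ 1 ≤ v₁ ∧ 1 ≤ v₂ ∧ 1 ≤ w₁ ∧ 1 ≤ w₂ ∧
      u = u₁ * u₂ ∧ v = v₁ * v₂ ∧ w = w₁ * w₂ ∧
      Nat.gcd u v = u₂ * v₁ ∧
      w₁ ∣ v₁ ∧ v₁ ∣ u₁ ∧ w₂ ∣ u₂ ∧ u₂ ∣ v₂ ∧
      Nat.gcd u₁ u₂ = 1 ∧ Nat.gcd v₁ v₂ = 1 ∧ Nat.gcd w₁ w₂ = 1 ∧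
      Nat.gcd u₁ v₂ = 1 ∧ Nat.gcd u₂ v₁ = 1 := by
  have hu0 : u ≠ 0 := by omega
  have hv0 : v ≠ 0 := by omega
  have hwu : w ∣ u := hdvd.trans (Nat.gcd_dvd_left u v)
  have hwv : w ∣ v := hdvd.trans (Nat.gcd_dvd_right u v)
  have hw0 : w ≠ 0 := ne_zero_of_dvd_ne_zero hu0 hwu
  let P : ℕ → Prop := fun p => v.factorization p ≤ u.factorization p
  have hdisj : ∀ p, P p → ¬¬P p := fun _ hp hnp => hnp hp
  refine ⟨Nat.factorPart P u, Nat.factorPart (¬P ·) u, Nat.factorPart P v,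
    Nat.factorPart (¬P ·) v, Nat.factorPart P w, Nat.factorPart (¬P ·) w,
    Nat.factorPart_pos, Nat.factorPart_pos, Nat.factorPart_pos,
    Nat.factorPart_pos, Nat.factorPart_pos, Nat.factorPart_pos,
    (Nat.factorPart_mul_factorPart_not hu0).symm, (Nat.factorPart_mul_factorPart_not hv0).symm,
    (Nat.factorPart_mul_factorPart_not hw0).symm, Nat.gcd_eq_factorPart_mul_factorPart hu0 hv0,
    Nat.factorPart_dvd_factorPart_of_dvd hwv hv0, Nat.factorPart_dvd_factorPart fun _ hp => hp,
    Nat.factorPart_dvd_factorPart_of_dvd hwu hu0,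
    Nat.factorPart_dvd_factorPart fun _ hp => (not_le.1 hp).le,
    Nat.coprime_factorPart_factorPart hdisj, Nat.coprime_factorPart_factorPart hdisj,
    Nat.coprime_factorPart_factorPart hdisj, Nat.coprime_factorPart_factorPart hdisj,
    Nat.coprime_factorPart_factorPart fun _ hnp hp => hnp hp⟩

/-- Given `w ∣ gcd(u,v)`, the numbers `u, v, w` admit a factorization
`u = u₁u₂`, `v = v₁v₂`, `w = w₁w₂` with `gcd(u,v) = u₂v₁`, `w₁ ∣ v₁ ∣ u₁`,
`w₂ ∣ u₂ ∣ v₂`, and the stated coprimality conditions. -/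
theorem factorization_lemma (u v w : ℕ) (hu : 1 ≤ u) (hv : 1 ≤ v) (hw : 1 ≤ w)
    (hdvd : w ∣ Nat.gcd u v) :
    ∃ u₁ u₂ v₁ v₂ w₁ w₂ : ℕ,
      1 ≤ u₁ ∧ 1 ≤ u₂ ∧ 1 ≤ v₁ ∧ 1 ≤ v₂ ∧ 1 ≤ w₁ ∧ 1 ≤ w₂ ∧
      u = u₁ * u₂ ∧ v = v₁ * v₂ ∧ w = w₁ * w₂ ∧
      Nat.gcd u v = u₂ * v₁ ∧
      w₁ ∣ v₁ ∧ v₁ ∣ u₁ ∧ w₂ ∣ u₂ ∧ u₂ ∣ v₂ ∧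
      Nat.gcd u₁ u₂ = 1 ∧ Nat.gcd v₁ v₂ = 1 ∧ Nat.gcd w₁ w₂ = 1 ∧
      Nat.gcd u₁ v₂ = 1 ∧ Nat.gcd u₂ v₁ = 1 :=
  factorization_lemma_general u v w hu hv hdvd
end

section
/- Suppose e is idempotent mod m, a, b, c ∈ R_m^e, and a lies in both orb(b) and orb(c). Then there exists d ∈ R_m^e with a ∈ orb(d) and |d|_m = lcm(|b|_m, |c|_m). -/
/-!
Inside the corner monoid `e(ℤ/m)` (multiplicative, with identity `e`) the residues of `R_m^e`
with positive `|·|_m` are exactly the elements of finite order, `|x|_m` is their order and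
`orb(x)` is the submonoid of their powers, so the claim is one about a commutative monoid.
There, split `lcm(n, k) = n' * k'` with `n' ∣ n`, `k' ∣ k` coprime and take
`d = b ^ (n / n') * c ^ (k / k')`, of order `lcm(n, k)`. Both factors are powers of `d`, since
their orders are coprime. By the Chinese remainder theorem `a = a₁ * a₂` with `a₁ ∈ ⟨b⟩`,
`a₁ ^ n' = 1` and `a₂ ∈ ⟨c⟩`, `a₂ ^ k' = 1`; the only such elements of the cyclic `⟨b⟩` are the
powers of `b ^ (n / n')`, and likewise for `c`, so `a` is a power of `d`.
-/

open Submonoid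

section Monoid

variable {G : Type*} [Monoid G]

theorem mem_powers_pow_orderOf_div {b z : G} {n : ℕ}
    (hb : orderOf b ≠ 0) (hn : n ∣ orderOf b) (hz : z ∈ powers b) (hzn : z ^ n = 1) :
    z ∈ powers (b ^ (orderOf b / n)) := by
  obtain ⟨i, rfl⟩ := hz
  have hn0 : n ≠ 0 := ne_zero_of_dvd_ne_zero hb hn
  have hdvd : orderOf b / n * n ∣ i * n := by
    rw [Nat.div_mul_cancel hn, orderOf_dvd_iff_pow_eq_one, pow_mul]
    exact hzn
  obtain ⟨j, rfl⟩ := Nat.dvd_of_mul_dvd_mul_right (Nat.pos_of_ne_zero hn0) hdvd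
  exact ⟨j, (pow_mul _ _ _).symm⟩

theorem Commute.mem_powers_mul_of_coprime {x y : G} (h : Commute x y)
    (hco : (orderOf x).Coprime (orderOf y)) : x ∈ powers (x * y) := by
  obtain ⟨k, hk⟩ := exists_pow_eq_self_of_coprime hco.symm
  refine ⟨orderOf y * k, ?_⟩
  dsimp only
  rw [h.mul_pow, pow_mul y, pow_orderOf_eq_one, one_pow, mul_one, pow_mul, hk]

theorem exists_pow_mul_pow_eq_self_of_coprime {a : G} {n k : ℕ}
    (hco : n.Coprime k) (ha : orderOf a ∣ n * k) :
    ∃ i j : ℕ, (a ^ i) ^ n = 1 ∧ (a ^ j) ^ k = 1 ∧ a ^ i * a ^ j = a := by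
  obtain ⟨i, hi1, hi0⟩ := Nat.chineseRemainder hco 1 0
  obtain ⟨j, hj0, hj1⟩ := Nat.chineseRemainder hco 0 1
  have hsum : i + j ≡ 1 [MOD n * k] :=
    (Nat.modEq_and_modEq_iff_modEq_mul hco).mp ⟨hi1.add hj0, hi0.add hj1⟩
  refine ⟨i, j, ?_, ?_, ?_⟩
  · rw [← pow_mul, ← orderOf_dvd_iff_pow_eq_one, mul_comm]
    exact ha.trans (mul_dvd_mul_left n (Nat.modEq_zero_iff_dvd.mp hi0))
  · rw [← pow_mul, ← orderOf_dvd_iff_pow_eq_one]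
    exact ha.trans (mul_dvd_mul_right (Nat.modEq_zero_iff_dvd.mp hj0) k)
  · rw [← pow_add, ← pow_mod_orderOf, hsum.of_dvd ha, pow_mod_orderOf, pow_one]

end Monoid

theorem exists_mem_powers_orderOf_eq_lcm {G : Type*} [CommMonoid G] {a b c : G}
    (hb : IsOfFinOrder b) (hc : IsOfFinOrder c) (hab : a ∈ powers b) (hac : a ∈ powers c) :
    ∃ d, a ∈ powers d ∧ orderOf d = Nat.lcm (orderOf b) (orderOf c) := by
  set n := orderOf b
  set k := orderOf c
  have hn : n ≠ 0 := hb.orderOf_pos.ne'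
  have hk : k ≠ 0 := hc.orderOf_pos.ne'
  set n' := Nat.factorizationLCMLeft n k
  set k' := Nat.factorizationLCMRight n k
  have hn' : n' ∣ n := Nat.factorizationLCMLeft_dvd_left n k
  have hk' : k' ∣ k := Nat.factorizationLCMRight_dvd_right n k
  have hco : n'.Coprime k' := Nat.coprime_factorizationLCMLeft_factorizationLCMRight n k
  set x := b ^ (n / n')
  set y := c ^ (k / k')
  have hx : x ∈ powers (x * y) := (Commute.all x y).mem_powers_mul_of_coprime (by
    rwa [orderOf_pow_orderOf_div hn hn', orderOf_pow_orderOf_div hk hk'])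
  have hy : y ∈ powers (x * y) := mul_comm y x ▸ (Commute.all y x).mem_powers_mul_of_coprime (by
    rwa [orderOf_pow_orderOf_div hn hn', orderOf_pow_orderOf_div hk hk', Nat.coprime_comm])
  refine ⟨x * y, ?_, (Commute.all b c).orderOf_mul_pow_eq_lcm hn hk⟩
  have ha : orderOf a ∣ n' * k' := by
    obtain ⟨i, rfl⟩ := hab
    rw [Nat.factorizationLCMLeft_mul_factorizationLCMRight hn hk]
    exact (orderOf_pow_dvd i).trans (Nat.dvd_lcm_left n k)
  obtain ⟨i, j, hi, hj, hij⟩ := exists_pow_mul_pow_eq_self_of_coprime hco ha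
  rw [← hij]
  exact mul_mem (powers_le.mpr hx (mem_powers_pow_orderOf_div hn hn' (pow_mem hab i) hi))
    (powers_le.mpr hy (mem_powers_pow_orderOf_div hk hk' (pow_mem hac j) hj))

namespace IsIdempotentElem.Corner

variable {R : Type*} [CommSemiring R] {e : R} {he : IsIdempotentElem e}

theorem val_mul (x y : he.Corner) : (x * y).1 = x.1 * y.1 := rfl

theorem val_one : (1 : he.Corner).1 = e := rfl

theorem val_pow (x : he.Corner) {n : ℕ} (hn : n ≠ 0) : (x ^ n).1 = x.1 ^ n := by
  induction n with
  | zero => exact absurd rfl hn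
  | succ n ih =>
    rcases eq_or_ne n 0 with rfl | hn
    · rw [zero_add, pow_one, pow_one]
    · rw [pow_succ, val_mul, ih hn, pow_succ]

end IsIdempotentElem.Corner

open IsIdempotentElem

section ZMod

variable {m : ℕ} {e : ZMod m}

theorem ord_pos_of_mem_orb_s18 {a b : ZMod m} (h : a ∈ orb m b) : 0 < ord m b := by
  obtain ⟨j, hj, -⟩ := Finset.mem_image.mp h
  rw [Finset.mem_Icc] at hj
  omega

theorem mem_corner_of_mem_Rme (he : IsIdempotentElem e) {x : ZMod m} (hx : x ∈ Rme m e) :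
    x ∈ Subsemigroup.corner e := by
  refine (Subsemigroup.mem_corner_iff_mul_right he
    (Semigroup.mem_center_iff.mpr (mul_comm · e))).mpr ?_
  rw [← hx.2, mul_comm, ← pow_succ]
  exact hx.1

variable {he : IsIdempotentElem e}

theorem idem_val_pow_iff {X : he.Corner} (hX : IsOfFinOrder X) {n : ℕ} (hn : n ≠ 0) :
    Idem m (X.1 ^ n) ↔ X ^ n = 1 := by
  rw [← IsIdempotentElem.iff_eq_one_of_isUnit hX.pow.isUnit, ← Corner.val_pow X hn, Idem, sq,
    IsIdempotentElem, ← Corner.val_mul]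
  exact ⟨Subtype.ext, congrArg Subtype.val⟩

theorem ord_val_eq_orderOf {X : he.Corner} (hX : IsOfFinOrder X) : ord m X.1 = orderOf X := by
  rw [orderOf, Function.minimalPeriod_eq_sInf_n_pos_IsPeriodicPt, ord]
  congr 1
  ext n
  simp only [Set.mem_ofPred_eq, isPeriodicPt_mul_iff_pow_eq_one]
  exact and_congr_right fun hn ↦ idem_val_pow_iff hX (Nat.one_le_iff_ne_zero.mp hn)

theorem isOfFinOrder_of_val_mem_Rme {X : he.Corner} (hX : X.1 ∈ Rme m e)
    (hpos : 0 < ord m X.1) : IsOfFinOrder X :=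
  isOfFinOrder_iff_pow_eq_one.mpr ⟨ord m X.1, hpos, Subtype.ext (by
    rw [Corner.val_pow X hpos.ne', Corner.val_one]; exact hX.2)⟩

theorem val_mem_Rme {X : he.Corner} (hX : IsOfFinOrder X) : X.1 ∈ Rme m e := by
  have hord : (X ^ orderOf X).1 = e := by rw [pow_orderOf_eq_one]; rfl
  rw [Corner.val_pow X hX.orderOf_pos.ne'] at hord
  refine ⟨?_, ?_⟩
  · rw [Reg, ord_val_eq_orderOf hX, pow_succ, hord, mul_comm]
    exact ((Subsemigroup.mem_corner_iff he).mp X.2).2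
  · rwa [ord_val_eq_orderOf hX]

theorem mem_orb_val_iff {X : he.Corner} (hX : IsOfFinOrder X) {y : ZMod m} :
    y ∈ orb m X.1 ↔ ∃ Y ∈ powers X, Y.1 = y := by
  rw [orb, Finset.mem_image, ord_val_eq_orderOf hX]
  constructor
  · rintro ⟨j, hj, rfl⟩
    exact ⟨X ^ j, ⟨j, rfl⟩, Corner.val_pow X
      (Nat.one_le_iff_ne_zero.mp (Finset.mem_Icc.mp hj).1)⟩
  · rintro ⟨_, ⟨j, rfl⟩, rfl⟩
    dsimp only
    -- `orb` uses the exponents `1, …, |x|_m`, so `X ^ 0` is reached as `X ^ orderOf X`.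
    have hpos := hX.orderOf_pos
    rcases eq_or_ne (j % orderOf X) 0 with hj | hj
    · refine ⟨orderOf X, Finset.mem_Icc.mpr ⟨hpos, le_rfl⟩, ?_⟩
      rw [← Corner.val_pow X hpos.ne', ← pow_mod_orderOf X j, hj, pow_orderOf_eq_one, pow_zero]
    · refine ⟨j % orderOf X, Finset.mem_Icc.mpr ⟨Nat.one_le_iff_ne_zero.mpr hj,
        (Nat.mod_lt j hpos).le⟩, ?_⟩
      rw [← Corner.val_pow X hj, pow_mod_orderOf]

end ZMod

theorem exists_orbit_lcm_general (m : ℕ) (e : ZMod m) (he : Idem m e)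
    (a b c : ZMod m) (hb : b ∈ Rme m e) (hc : c ∈ Rme m e)
    (hab : a ∈ orb m b) (hac : a ∈ orb m c) :
    ∃ d ∈ Rme m e, a ∈ orb m d ∧ ord m d = Nat.lcm (ord m b) (ord m c) := by
  have he' : IsIdempotentElem e := (sq e).symm.trans he
  let B : he'.Corner := ⟨b, mem_corner_of_mem_Rme he' hb⟩
  let C : he'.Corner := ⟨c, mem_corner_of_mem_Rme he' hc⟩
  have hB : IsOfFinOrder B := isOfFinOrder_of_val_mem_Rme hb (ord_pos_of_mem_orb_s18 hab)
  have hC : IsOfFinOrder C := isOfFinOrder_of_val_mem_Rme hc (ord_pos_of_mem_orb_s18 hac)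
  obtain ⟨A, hAB, rfl⟩ := (mem_orb_val_iff hB).mp hab
  obtain ⟨A', hAC, hA'A⟩ := (mem_orb_val_iff hC).mp hac
  obtain rfl : A = A' := (Subtype.ext hA'A).symm
  obtain ⟨D, hAD, hDord⟩ := exists_mem_powers_orderOf_eq_lcm hB hC hAB hAC
  have hD : IsOfFinOrder D :=
    orderOf_pos_iff.mp (hDord ▸ Nat.lcm_pos hB.orderOf_pos hC.orderOf_pos)
  refine ⟨D.1, val_mem_Rme hD, (mem_orb_val_iff hD).mpr ⟨A, hAD, rfl⟩, ?_⟩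
  rw [ord_val_eq_orderOf hD, hDord, ord_val_eq_orderOf hB, ord_val_eq_orderOf hC]

/-- If `a, b, c ∈ R_m^e` and `a ∈ orb(b) ∩ orb(c)`, then some `d ∈ R_m^e`
satisfies `a ∈ orb(d)` and `|d|_m = lcm(|b|_m, |c|_m)`. -/
theorem exists_orbit_lcm (m : ℕ) (hm : 1 ≤ m) (e : ZMod m) (he : Idem m e)
    (a b c : ZMod m) (ha : a ∈ Rme m e) (hb : b ∈ Rme m e) (hc : c ∈ Rme m e)
    (hab : a ∈ orb m b) (hac : a ∈ orb m c) :
    ∃ d ∈ Rme m e, a ∈ orb m d ∧ ord m d = Nat.lcm (ord m b) (ord m c) :=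
  exists_orbit_lcm_general m e he a b c hb hc hab hac
end
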